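/- In any spanning tree T of the reduction graph G_red with lifetime at least one, every element node w_j is a descendant of the hub node C, the hub node C has at most n+p descendants, and consequently the number of subset nodes s_i that are T-parents of at least one element node is at most p. -/

import Mathlib

open SimpleGraph

/-- Vertices of the reduction graph: sink `v0`, hub nodes `A`, `C`,
third-row nodes `r_1,…,r_k`, subset nodes `s_1,…,s_k`, element nodes `w_1,…,w_n`. -/
inductive RedVertex (k n : ℕ) : Type where
  | sink : RedVertex k n
  | hubA : RedVertex k n
  | hubC : RedVertex k n
  | row : Fin k → RedVertex k n
  | sub : Fin k → RedVertex k n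
  | elt : Fin n → RedVertex k n
  deriving DecidableEq

/-- Base relation giving the edges of the reduction graph. -/
def redRel {k n : ℕ} (B : Fin k → Finset (Fin n)) :
    RedVertex k n → RedVertex k n → Prop
  | .sink, .hubA => True
  | .sink, .hubC => True
  | .hubA, .row _ => True
  | .hubC, .sub _ => True
  | .row i, .sub i' => i = i'
  | .sub i, .elt j => j ∈ B i
  | _, _ => False

/-- The reduction graph `G_red`. -/
def GRed {k n : ℕ} (B : Fin k → Finset (Fin n)) : SimpleGraph (RedVertex k n) :=
  SimpleGraph.fromRel (redRel B)

/-- `x` is a descendant of `u` in the tree `T` rooted at the sink: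
`x ≠ u`, `x ≠ v0`, and the unique path in `T` from `x` to the sink passes through `u`. -/
def IsDesc {k n : ℕ} (T : SimpleGraph (RedVertex k n)) (u x : RedVertex k n) : Prop :=
  x ≠ u ∧ x ≠ RedVertex.sink ∧ ∀ p : T.Path x RedVertex.sink, u ∈ p.1.support

/-- `desc_T(u)`: the number of descendants of `u` in `T`. -/
noncomputable def descCount {k n : ℕ} (T : SimpleGraph (RedVertex k n))
    (u : RedVertex k n) : ℕ :=
  {x | IsDesc T u x}.ncard

/-- `v` is the `T`-parent of `u`: it is a neighbor of `u` lying on the unique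
path in `T` from `u` to the sink. -/
def IsParent {k n : ℕ} (T : SimpleGraph (RedVertex k n)) (u v : RedVertex k n) : Prop :=
  T.Adj u v ∧ ∀ p : T.Path u RedVertex.sink, v ∈ p.1.support

/-- Energy assignment on the vertices of the reduction graph
(the sink has unlimited energy; its value here is irrelevant). -/
noncomputable def energy {k n : ℕ} (B : Fin k → Finset (Fin n)) (p : ℕ) (a : ℝ) :
    RedVertex k n → ℝ
  | .sink => 0
  | .hubA => 2 * (k : ℝ) - (p : ℝ) + 1 + a
  | .hubC => (n : ℝ) + (p : ℝ) + 1 + a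
  | .row _ => 2 + a
  | .sub i => ((B i).card : ℝ) + 1 + a
  | .elt _ => 1 + a

/-- `T` has lifetime at least one: `desc_T(u) + 1 + a ≤ E(u)` for every `u ≠ v0`. -/
def LifetimeGeOne {k n : ℕ} (B : Fin k → Finset (Fin n)) (p : ℕ) (a : ℝ)
    (T : SimpleGraph (RedVertex k n)) : Prop :=
  ∀ u : RedVertex k n, u ≠ RedVertex.sink →
    (descCount T u : ℝ) + 1 + a ≤ energy B p a u

instance {k n : ℕ} : Finite (RedVertex k n) := by
  let f : RedVertex k n → (Fin 3) ⊕ (Fin k) ⊕ (Fin k) ⊕ (Fin n) := fun v =>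
    match v with
    | .sink => .inl 0
    | .hubA => .inl 1
    | .hubC => .inl 2
    | .row i => .inr (.inl i)
    | .sub i => .inr (.inr (.inl i))
    | .elt j => .inr (.inr (.inr j))
  have : Function.Injective f := by
    intro a b h
    cases a <;> cases b <;> simp_all [f]
  exact Finite.of_injective f this

/-- In any spanning tree `T` of `G_red` with lifetime at least one,
every element node is a descendant of the hub node `C`, the hub node `C` has at most
`n + p` descendants, and consequently the number of subset nodes that are `T`-parents
of at least one element node is at most `p`. -/
theorem stmt_6 {k n : ℕ} (hk : 1 ≤ k) (hn : 1 ≤ n)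
    (B : Fin k → Finset (Fin n)) (hcov : ∀ j : Fin n, ∃ i : Fin k, j ∈ B i)
    (p : ℕ) (hp1 : 1 ≤ p) (hpk : p ≤ k) (a : ℝ) (ha : 0 ≤ a)
    (T : SimpleGraph (RedVertex k n)) (hsub : T ≤ GRed B) (htree : T.IsTree)
    (hlife : LifetimeGeOne B p a T) :
    (∀ j : Fin n, IsDesc T RedVertex.hubC (RedVertex.elt j)) ∧
    descCount T RedVertex.hubC ≤ n + p ∧
    {i : Fin k | ∃ j : Fin n,
        IsParent T (RedVertex.elt j) (RedVertex.sub i)}.ncard ≤ p := by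
  classical
  -- a choice of path from every vertex to the sink
  have P : ∀ x : RedVertex k n, T.Path x RedVertex.sink :=
    fun x => ((htree.isConnected.preconnected x RedVertex.sink).some).toPath
  -- uniqueness of paths
  have Puniq : ∀ (x : RedVertex k n) (q : T.Path x RedVertex.sink), q = P x :=
    fun x q => htree.IsAcyclic.path_unique q (P x)
  -- characterization of descendants via the chosen path
  have hdesc_iff : ∀ u x : RedVertex k n,
      IsDesc T u x ↔ (x ≠ u ∧ x ≠ RedVertex.sink ∧ u ∈ (P x).1.support) := by
    intro u x
    constructor
    · rintro ⟨h1, h2, h3⟩; exact ⟨h1, h2, h3 (P x)⟩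
    · rintro ⟨h1, h2, h3⟩
      exact ⟨h1, h2, fun q => by rw [Puniq x q]; exact h3⟩
  -- the chosen path from a vertex on the path is a suffix
  have hsuffix : ∀ (x u : RedVertex k n) (hu : u ∈ (P x).1.support),
      (P u).1.support ⊆ (P x).1.support := by
    intro x u hu
    have hdrop : ((P x).1.dropUntil u hu).IsPath := (P x).2.dropUntil hu
    have he : (⟨(P x).1.dropUntil u hu, hdrop⟩ : T.Path u RedVertex.sink) = P u :=
      Puniq u _
    intro y hy
    have hy' : y ∈ ((P x).1.dropUntil u hu).support := by
      rw [show (P u).1 = (P x).1.dropUntil u hu from congrArg Subtype.val he.symm] at hy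
      exact hy
    exact Walk.support_dropUntil_subset (P x).1 hu hy'
  -- step: the second vertex of the chosen path
  have hstep : ∀ x : RedVertex k n, x ≠ RedVertex.sink →
      ∃ v : RedVertex k n, T.Adj x v ∧ v ∈ (P x).1.support ∧
        (P v).1.support ⊆ (P x).1.support := by
    intro x hx
    obtain ⟨v, hadj, w, hw⟩ := Walk.exists_eq_cons_of_ne hx (P x).1
    have hwpath : w.IsPath := by
      have := (P x).2
      rw [hw] at this
      exact this.of_cons
    have hPv : (⟨w, hwpath⟩ : T.Path v RedVertex.sink) = P v := Puniq v _
    have hPvw : (P v).1 = w := congrArg Subtype.val hPv.symm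
    refine ⟨v, hadj, ?_, ?_⟩
    · rw [hw, Walk.support_cons]
      exact List.mem_cons_of_mem _ w.start_mem_support
    · rw [hPvw, hw, Walk.support_cons]
      exact List.subset_cons_self _ _
  -- adjacency characterizations
  have hadj_elt : ∀ (j : Fin n) (v : RedVertex k n), T.Adj (RedVertex.elt j) v →
      ∃ i : Fin k, v = RedVertex.sub i := by
    intro j v h
    have h' := hsub h
    rw [GRed, fromRel_adj] at h'
    obtain ⟨-, h'⟩ := h'
    cases v <;> simp [redRel] at h' <;> exact ⟨_, rfl⟩
  have hadj_sub : ∀ (i : Fin k) (v : RedVertex k n), T.Adj (RedVertex.sub i) v →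
      v = RedVertex.hubC ∨ v = RedVertex.row i ∨ ∃ j : Fin n, v = RedVertex.elt j := by
    intro i v h
    have h' := hsub h
    rw [GRed, fromRel_adj] at h'
    obtain ⟨-, h'⟩ := h'
    cases v with
    | sink => simp [redRel] at h'
    | hubA => simp [redRel] at h'
    | hubC => exact Or.inl rfl
    | row i' =>
      right; left
      rcases h' with h' | h' <;> simp [redRel] at h' <;> rw [h']
    | sub i' => simp [redRel] at h'
    | elt j => exact Or.inr (Or.inr ⟨j, rfl⟩)
  -- finiteness of descendant sets
  have hfin : ∀ u : RedVertex k n, {x | IsDesc T u x}.Finite := fun u => Set.toFinite _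
  -- descendant count bounds from the lifetime condition
  have helt0 : ∀ (j : Fin n) (x : RedVertex k n), ¬ IsDesc T (RedVertex.elt j) x := by
    intro j x hx
    have h1 := hlife (RedVertex.elt j) (by simp)
    simp only [energy] at h1
    have h2 : (descCount T (RedVertex.elt j) : ℝ) ≤ 0 := by linarith
    have h3 : descCount T (RedVertex.elt j) = 0 := by exact_mod_cast le_antisymm h2 (by positivity)
    have h4 : 0 < descCount T (RedVertex.elt j) := by
      rw [descCount, Set.ncard_pos (hfin _)]
      exact ⟨x, hx⟩
    omega
  have hrow1 : ∀ i : Fin k, descCount T (RedVertex.row i) ≤ 1 := by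
    intro i
    have h1 := hlife (RedVertex.row i) (by simp)
    simp only [energy] at h1
    have : (descCount T (RedVertex.row i) : ℝ) ≤ 1 := by linarith
    exact_mod_cast this
  have hCbound : descCount T RedVertex.hubC ≤ n + p := by
    have h1 := hlife RedVertex.hubC (by simp)
    simp only [energy] at h1
    have : (descCount T RedVertex.hubC : ℝ) ≤ (n : ℝ) + (p : ℝ) := by linarith
    exact_mod_cast this
  -- main lemma: if some element's path goes through sub i, then hubC is on sub i's path
  have hmain : ∀ (i : Fin k) (j : Fin n),
      RedVertex.sub i ∈ (P (RedVertex.elt j)).1.support →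
      RedVertex.hubC ∈ (P (RedVertex.sub i)).1.support := by
    intro i j hj
    obtain ⟨v, hTadj, hvmem, hvsub⟩ := hstep (RedVertex.sub i) (by simp)
    rcases hadj_sub i v hTadj with hv | hv | ⟨j', hv⟩
    · subst hv; exact hvmem
    · -- second vertex is the row node: row i has two descendants, contradiction
      subst hv
      exfalso
      have hd1 : IsDesc T (RedVertex.row i) (RedVertex.sub i) :=
        (hdesc_iff _ _).2 ⟨by simp, by simp, hvmem⟩
      have hd2 : IsDesc T (RedVertex.row i) (RedVertex.elt j) :=
        (hdesc_iff _ _).2 ⟨by simp, by simp, hsuffix _ _ hj hvmem⟩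
      have hpair : ({RedVertex.sub i, RedVertex.elt j} : Set (RedVertex k n))
          ⊆ {x | IsDesc T (RedVertex.row i) x} := by
        intro x hx
        rcases hx with hx | hx
        · subst hx; exact hd1
        · simp only [Set.mem_singleton_iff] at hx; subst hx; exact hd2
      have h2 : 2 ≤ descCount T (RedVertex.row i) := by
        rw [descCount, ← Set.ncard_pair (show (RedVertex.sub i : RedVertex k n)
          ≠ RedVertex.elt j by simp)]
        exact Set.ncard_le_ncard hpair (hfin _)
      have := hrow1 i
      omega
    · -- second vertex is an element node: it would have a descendant, contradiction
      subst hv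
      exact absurd ((hdesc_iff _ _).2 ⟨by simp, by simp, hvmem⟩) (helt0 j' _)
  -- Part 1
  have part1 : ∀ j : Fin n, IsDesc T RedVertex.hubC (RedVertex.elt j) := by
    intro j
    obtain ⟨v, hTadj, hvmem, hvsub⟩ := hstep (RedVertex.elt j) (by simp)
    obtain ⟨i, rfl⟩ := hadj_elt j v hTadj
    exact (hdesc_iff _ _).2 ⟨by simp, by simp, hvsub (hmain i j hvmem)⟩
  refine ⟨part1, hCbound, ?_⟩
  -- Part 3
  set S : Set (Fin k) :=
    {i : Fin k | ∃ j : Fin n, IsParent T (RedVertex.elt j) (RedVertex.sub i)} with hS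
  set D : Set (RedVertex k n) := {x | IsDesc T RedVertex.hubC x} with hD
  have hsubD : ∀ i ∈ S, IsDesc T RedVertex.hubC (RedVertex.sub i) := by
    intro i hi
    obtain ⟨j, hTadj, hmem⟩ := hi
    have h1 : RedVertex.sub i ∈ (P (RedVertex.elt j)).1.support := hmem _
    exact (hdesc_iff _ _).2 ⟨by simp, by simp, hmain i j h1⟩
  have hunion : (RedVertex.sub '' S ∪ Set.range (RedVertex.elt : Fin n → RedVertex k n))
      ⊆ D := by
    rintro x (⟨i, hi, rfl⟩ | ⟨j, rfl⟩)
    · exact hsubD i hi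
    · exact part1 j
  have hdisj : Disjoint (RedVertex.sub '' S)
      (Set.range (RedVertex.elt : Fin n → RedVertex k n)) := by
    rw [Set.disjoint_left]
    rintro x ⟨i, hi, rfl⟩ ⟨j, hj⟩
    cases hj
  have hinj_sub : Function.Injective (RedVertex.sub : Fin k → RedVertex k n) := by
    intro a b h; injection h
  have hinj_elt : Function.Injective (RedVertex.elt : Fin n → RedVertex k n) := by
    intro a b h; injection h
  have hcard_union : (RedVertex.sub '' S ∪ Set.range
      (RedVertex.elt : Fin n → RedVertex k n)).ncard = S.ncard + n := by
    rw [Set.ncard_union_eq hdisj (Set.toFinite _) (Set.toFinite _),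
      Set.ncard_image_of_injective _ hinj_sub, ← Set.image_univ,
      Set.ncard_image_of_injective _ hinj_elt, Set.ncard_univ, Nat.card_eq_fintype_card,
      Fintype.card_fin]
  have hle : S.ncard + n ≤ descCount T RedVertex.hubC := by
    rw [← hcard_union, descCount]
    exact Set.ncard_le_ncard hunion (hfin _)
  omega
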